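/- arXiv:1704.01671 — 2 statements merged into one kernel-verified Lean document; each statement's English description precedes it below -/
import Mathlib

section
/- There exists a matrix P ∈ GL(14, ℤ) such that Pᵀ M P equals the block-diagonal matrix U ⊕ D5(-1) ⊕ E7(-1); that is, the Picard lattice of the family of K3 surfaces associated to Z_{1,0} is isometric to U ⊕ D5 ⊕ E7. -/
open Matrix

def M : Matrix (Fin 14) (Fin 14) ℤ :=
  !![-2, 0, 0, 0, 0, 0, 1, 0, 0, 0, 0, 0, 0, 0;
    0, -2, 0, 0, 0, 0, 1, 1, 0, 1, 0, 0, 0, 0;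
    0, 0, -2, 1, 0, 0, 0, 0, 1, 0, 0, 0, 0, 1;
    0, 0, 1, -2, 1, 1, 0, 0, 0, 0, 0, 0, 0, 0;
    0, 0, 0, 1, -2, 0, 0, 0, 0, 0, 0, 0, 0, 0;
    0, 0, 0, 1, 0, -2, 0, 0, 0, 0, 0, 0, 0, 0;
    1, 1, 0, 0, 0, 0, -2, 0, 0, 0, 0, 0, 0, 0;
    0, 1, 0, 0, 0, 0, 0, -2, 0, 0, 0, 0, 0, 0;
    0, 0, 1, 0, 0, 0, 0, 0, -2, 0, 0, 0, 0, 0;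
    0, 1, 0, 0, 0, 0, 0, 0, 0, -2, 1, 0, 0, 0;
    0, 0, 0, 0, 0, 0, 0, 0, 0, 1, -2, 1, 0, 0;
    0, 0, 0, 0, 0, 0, 0, 0, 0, 0, 1, -2, 1, 0;
    0, 0, 0, 0, 0, 0, 0, 0, 0, 0, 0, 1, -2, 1;
    0, 0, 1, 0, 0, 0, 0, 0, 0, 0, 0, 0, 1, -2]

def B : Matrix (Fin 14) (Fin 14) ℤ :=
  !![0, 1, 0, 0, 0, 0, 0, 0, 0, 0, 0, 0, 0, 0;
    1, 0, 0, 0, 0, 0, 0, 0, 0, 0, 0, 0, 0, 0;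
    0, 0, -2, 1, 0, 0, 0, 0, 0, 0, 0, 0, 0, 0;
    0, 0, 1, -2, 1, 0, 0, 0, 0, 0, 0, 0, 0, 0;
    0, 0, 0, 1, -2, 1, 1, 0, 0, 0, 0, 0, 0, 0;
    0, 0, 0, 0, 1, -2, 0, 0, 0, 0, 0, 0, 0, 0;
    0, 0, 0, 0, 1, 0, -2, 0, 0, 0, 0, 0, 0, 0;
    0, 0, 0, 0, 0, 0, 0, -2, 0, 1, 0, 0, 0, 0;
    0, 0, 0, 0, 0, 0, 0, 0, -2, 0, 1, 0, 0, 0;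
    0, 0, 0, 0, 0, 0, 0, 1, 0, -2, 1, 0, 0, 0;
    0, 0, 0, 0, 0, 0, 0, 0, 1, 1, -2, 1, 0, 0;
    0, 0, 0, 0, 0, 0, 0, 0, 0, 0, 1, -2, 1, 0;
    0, 0, 0, 0, 0, 0, 0, 0, 0, 0, 0, 1, -2, 1;
    0, 0, 0, 0, 0, 0, 0, 0, 0, 0, 0, 0, 1, -2]

theorem Matrix.det_eq_one_or_neg_one_of_mul_eq_one {n : Type*} [Fintype n] [DecidableEq n]
    {P Q : Matrix n n ℤ} (h : P * Q = 1) : P.det = 1 ∨ P.det = -1 :=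
  Int.eq_one_or_neg_one_of_mul_eq_one (by rw [← det_mul, h, det_one])

def isometryMatrix : Matrix (Fin 14) (Fin 14) ℤ :=
  !![0, 0, 0, 0, 0, 0, 0, 0, 1, 0, 0, -1, 1, 0;
    0, 0, 0, 0, 0, 0, 0, 0, 2, 1, 0, -2, 2, -2;
    2, 2, 0, 1, 0, 0, 0, 0, -2, 0, 0, 2, -2, 2;
    2, 2, 0, 0, 1, 0, 0, 0, -2, 0, 0, 2, -2, 2;
    1, 1, 0, 0, 0, 0, 1, 0, -1, 0, 0, 1, -1, 1;
    1, 1, 0, 0, 0, 1, 0, 0, -1, 0, 0, 1, -1, 1;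
    0, 0, 0, 0, 0, 0, 0, 0, 2, 0, 0, -1, 1, -1;
    0, 0, 0, 0, 0, 0, 0, 1, 1, 0, 0, -1, 1, -1;
    1, 1, 1, 0, 0, 0, 0, 0, -1, 0, 0, 1, -1, 1;
    0, 0, 0, 0, 0, 0, 0, 0, 1, 0, 1, -2, 2, -2;
    0, 0, 0, 0, 0, 0, 0, 0, 1, 0, 0, -1, 2, -2;
    0, 0, 0, 0, 0, 0, 0, 0, 1, 0, 0, -1, 1, -1;
    0, 1, 0, 0, 0, 0, 0, 0, 0, 0, 0, 0, 0, 0;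
    1, 1, 0, 0, 0, 0, 0, 0, -1, 0, 0, 1, -1, 1]

-- An integral inverse certifies unimodularity: `decide` cannot expand a 14 × 14 determinant.
def isometryMatrixInv : Matrix (Fin 14) (Fin 14) ℤ :=
  !![0, 0, 0, 0, 0, 0, 0, 0, 0, 0, 0, 1, -1, 1;
    0, 0, 0, 0, 0, 0, 0, 0, 0, 0, 0, 0, 1, 0;
    0, 0, 0, 0, 0, 0, 0, 0, 1, 0, 0, 0, 0, -1;
    0, 0, 1, 0, 0, 0, 0, 0, 0, 0, 0, 0, 0, -2;
    0, 0, 0, 1, 0, 0, 0, 0, 0, 0, 0, 0, 0, -2;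
    0, 0, 0, 0, 0, 1, 0, 0, 0, 0, 0, 0, 0, -1;
    0, 0, 0, 0, 1, 0, 0, 0, 0, 0, 0, 0, 0, -1;
    0, 0, 0, 0, 0, 0, 0, 1, 0, 0, 0, -1, 0, 0;
    0, 0, 0, 0, 0, 0, 1, 0, 0, 0, 0, -1, 0, 0;
    0, 1, 0, 0, 0, 0, 0, 0, 0, 0, 0, -2, 0, 0;
    0, 0, 0, 0, 0, 0, 1, 0, 0, 1, 0, -3, 0, 0;
    0, 0, 0, 0, 0, 0, 1, 0, 0, 0, 1, -3, 0, 0;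
    1, 0, 0, 0, 0, 0, 0, 0, 0, 0, 1, -2, 0, 0;
    1, 0, 0, 0, 0, 0, 0, 0, 0, 0, 0, -1, 0, 0]

theorem isometryMatrix_mul_isometryMatrixInv : isometryMatrix * isometryMatrixInv = 1 := by
  decide

theorem isometryMatrix_transpose_mul_M_mul : isometryMatrixᵀ * M * isometryMatrix = B := by
  decide

theorem stmt_3 :
    (∃ P : Matrix (Fin 14) (Fin 14) ℤ,
      (P.det = 1 ∨ P.det = -1) ∧ Pᵀ * M * P = B) := by
  exact ⟨isometryMatrix,
    det_eq_one_or_neg_one_of_mul_eq_one isometryMatrix_mul_isometryMatrixInv,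
    isometryMatrix_transpose_mul_M_mul⟩
end

section
/- The determinant of M' equals 18, the cokernel ℤ³ / M'·ℤ³ is isomorphic as an abelian group to (ℤ/9ℤ) × (ℤ/2ℤ), and there exists a primitive embedding of the lattice (ℤ³, M') into the K3 lattice: an injective ℤ-linear map ι : ℤ³ → ℤ²² with (ι x)ᵀ G (ι y) = xᵀ M' y for all x, y ∈ ℤ³ such that ℤ²² / ι(ℤ³) is torsion-free. -/
open Matrix

def M' : Matrix (Fin 3) (Fin 3) ℤ :=
  !![-2, 2, 0;
    2, -2, 3;
    0, 3, -2]

def GK3 : Matrix (Fin 22) (Fin 22) ℤ :=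
  !![0, 1, 0, 0, 0, 0, 0, 0, 0, 0, 0, 0, 0, 0, 0, 0, 0, 0, 0, 0, 0, 0;
    1, 0, 0, 0, 0, 0, 0, 0, 0, 0, 0, 0, 0, 0, 0, 0, 0, 0, 0, 0, 0, 0;
    0, 0, 0, 1, 0, 0, 0, 0, 0, 0, 0, 0, 0, 0, 0, 0, 0, 0, 0, 0, 0, 0;
    0, 0, 1, 0, 0, 0, 0, 0, 0, 0, 0, 0, 0, 0, 0, 0, 0, 0, 0, 0, 0, 0;
    0, 0, 0, 0, 0, 1, 0, 0, 0, 0, 0, 0, 0, 0, 0, 0, 0, 0, 0, 0, 0, 0;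
    0, 0, 0, 0, 1, 0, 0, 0, 0, 0, 0, 0, 0, 0, 0, 0, 0, 0, 0, 0, 0, 0;
    0, 0, 0, 0, 0, 0, -2, 0, 1, 0, 0, 0, 0, 0, 0, 0, 0, 0, 0, 0, 0, 0;
    0, 0, 0, 0, 0, 0, 0, -2, 0, 1, 0, 0, 0, 0, 0, 0, 0, 0, 0, 0, 0, 0;
    0, 0, 0, 0, 0, 0, 1, 0, -2, 1, 0, 0, 0, 0, 0, 0, 0, 0, 0, 0, 0, 0;
    0, 0, 0, 0, 0, 0, 0, 1, 1, -2, 1, 0, 0, 0, 0, 0, 0, 0, 0, 0, 0, 0;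
    0, 0, 0, 0, 0, 0, 0, 0, 0, 1, -2, 1, 0, 0, 0, 0, 0, 0, 0, 0, 0, 0;
    0, 0, 0, 0, 0, 0, 0, 0, 0, 0, 1, -2, 1, 0, 0, 0, 0, 0, 0, 0, 0, 0;
    0, 0, 0, 0, 0, 0, 0, 0, 0, 0, 0, 1, -2, 1, 0, 0, 0, 0, 0, 0, 0, 0;
    0, 0, 0, 0, 0, 0, 0, 0, 0, 0, 0, 0, 1, -2, 0, 0, 0, 0, 0, 0, 0, 0;
    0, 0, 0, 0, 0, 0, 0, 0, 0, 0, 0, 0, 0, 0, -2, 0, 1, 0, 0, 0, 0, 0;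
    0, 0, 0, 0, 0, 0, 0, 0, 0, 0, 0, 0, 0, 0, 0, -2, 0, 1, 0, 0, 0, 0;
    0, 0, 0, 0, 0, 0, 0, 0, 0, 0, 0, 0, 0, 0, 1, 0, -2, 1, 0, 0, 0, 0;
    0, 0, 0, 0, 0, 0, 0, 0, 0, 0, 0, 0, 0, 0, 0, 1, 1, -2, 1, 0, 0, 0;
    0, 0, 0, 0, 0, 0, 0, 0, 0, 0, 0, 0, 0, 0, 0, 0, 0, 1, -2, 1, 0, 0;
    0, 0, 0, 0, 0, 0, 0, 0, 0, 0, 0, 0, 0, 0, 0, 0, 0, 0, 1, -2, 1, 0;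
    0, 0, 0, 0, 0, 0, 0, 0, 0, 0, 0, 0, 0, 0, 0, 0, 0, 0, 0, 1, -2, 1;
    0, 0, 0, 0, 0, 0, 0, 0, 0, 0, 0, 0, 0, 0, 0, 0, 0, 0, 0, 0, 1, -2]

/-- Embedding matrix: columns are images of basis vectors in the K3 lattice. -/
def B22 : Matrix (Fin 22) (Fin 3) ℤ :=
  !![1,0,0; -1,0,0; 0,1,0; 2,-1,0; 0,0,1; 0,3,-1;
     0,0,0; 0,0,0; 0,0,0; 0,0,0; 0,0,0; 0,0,0; 0,0,0; 0,0,0;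
     0,0,0; 0,0,0; 0,0,0; 0,0,0; 0,0,0; 0,0,0; 0,0,0; 0,0,0]

/-- Projection matrix picking coordinates 0, 2, 4. -/
def P3 : Matrix (Fin 3) (Fin 22) ℤ :=
  !![1,0,0,0,0,0,0,0,0,0,0,0,0,0,0,0,0,0,0,0,0,0;
     0,0,1,0,0,0,0,0,0,0,0,0,0,0,0,0,0,0,0,0,0,0;
     0,0,0,0,1,0,0,0,0,0,0,0,0,0,0,0,0,0,0,0,0,0]

lemma PB_eq_one : P3 * B22 = 1 := by decide

set_option maxRecDepth 4000 in
lemma gram_eq : B22ᵀ * GK3 * B22 = M' := by decide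

/-- Invariant-factor map for the cokernel of M'. -/
def φ : (Fin 3 → ℤ) →ₗ[ℤ] ZMod 9 × ZMod 2 where
  toFun x := (((x 0 + x 1 + 6 * x 2 : ℤ) : ZMod 9), ((x 0 : ℤ) : ZMod 2))
  map_add' x y := by
    simp only [Pi.add_apply, Prod.mk_add_mk, Prod.mk.injEq]
    constructor <;> push_cast <;> ring
  map_smul' k x := by
    simp only [Pi.smul_apply, smul_eq_mul, RingHom.id_apply, Prod.smul_mk, zsmul_eq_mul,
      Prod.mk.injEq]
    constructor <;> push_cast <;> ring

lemma φ_surj : Function.Surjective φ := by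
  rintro ⟨p, q⟩
  refine ⟨![(q.val : ℤ), (p.val : ℤ) - (q.val : ℤ), 0], ?_⟩
  show ((((q.val : ℤ) + ((p.val : ℤ) - (q.val : ℤ)) + 6 * 0 : ℤ) : ZMod 9),
       (((q.val : ℤ) : ZMod 2))) = (p, q)
  have h1 : (((q.val : ℤ) + ((p.val : ℤ) - (q.val : ℤ)) + 6 * 0 : ℤ) : ZMod 9) = p := by
    push_cast
    simp [ZMod.natCast_val, ZMod.cast_id]
  have h2 : (((q.val : ℤ) : ZMod 2)) = q := by
    push_cast
    simp [ZMod.natCast_val, ZMod.cast_id]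
  rw [h1, h2]

lemma ker_eq : LinearMap.ker φ = LinearMap.range (Matrix.toLin' M') := by
  ext x
  constructor
  · intro hx
    simp only [LinearMap.mem_ker] at hx
    have h9 : ((x 0 + x 1 + 6 * x 2 : ℤ) : ZMod 9) = 0 := congrArg Prod.fst hx
    have h2 : ((x 0 : ℤ) : ZMod 2) = 0 := congrArg Prod.snd hx
    rw [ZMod.intCast_zmod_eq_zero_iff_dvd] at h9 h2
    obtain ⟨c, hc⟩ := h9
    obtain ⟨a, ha⟩ := h2
    refine ⟨![-a - x 2 + 2 * c, -(x 2) + 2 * c, -2 * (x 2) + 3 * c], ?_⟩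
    rw [Matrix.toLin'_apply]
    funext i
    fin_cases i <;>
      simp [M', Matrix.mulVec, dotProduct, Fin.sum_univ_succ] <;>
        push_cast at hc ha ⊢ <;> linarith
  · rintro ⟨y, rfl⟩
    simp only [LinearMap.mem_ker, Matrix.toLin'_apply]
    have e9 : ((M' *ᵥ y) 0 + (M' *ᵥ y) 1 + 6 * (M' *ᵥ y) 2 : ℤ)
        = 9 * (2 * y 1 - y 2) := by
      simp [M', Matrix.mulVec, dotProduct, Fin.sum_univ_succ]; ring
    have e2 : ((M' *ᵥ y) 0 : ℤ) = 2 * (- y 0 + y 1) := by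
      simp [M', Matrix.mulVec, dotProduct, Fin.sum_univ_succ]; ring
    show ((((M' *ᵥ y) 0 + (M' *ᵥ y) 1 + 6 * (M' *ᵥ y) 2 : ℤ) : ZMod 9),
      (((M' *ᵥ y) 0 : ℤ) : ZMod 2)) = 0
    rw [e9, e2, Prod.mk_eq_zero]
    constructor
    · rw [ZMod.intCast_zmod_eq_zero_iff_dvd]
      exact_mod_cast dvd_mul_right 9 (2 * y 1 - y 2)
    · rw [ZMod.intCast_zmod_eq_zero_iff_dvd]
      exact_mod_cast dvd_mul_right 2 (- y 0 + y 1)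

theorem stmt_6 :
    Matrix.det M' = 18 ∧
    Nonempty (((Fin 3 → ℤ) ⧸ LinearMap.range (Matrix.toLin' M')) ≃+ (ZMod 9 × ZMod 2)) ∧
    ∃ ι : (Fin 3 → ℤ) →ₗ[ℤ] (Fin 22 → ℤ),
      Function.Injective ι ∧
      (∀ x y : Fin 3 → ℤ, ι x ⬝ᵥ (GK3 *ᵥ ι y) = x ⬝ᵥ (M' *ᵥ y)) ∧
      (∀ (v : Fin 22 → ℤ) (k : ℤ), k ≠ 0 → k • v ∈ LinearMap.range ι → v ∈ LinearMap.range ι) := by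
  refine ⟨by decide, ?_, ?_⟩
  · exact ⟨((Submodule.quotEquivOfEq _ _ ker_eq.symm).trans
      (φ.quotKerEquivOfSurjective φ_surj)).toAddEquiv⟩
  · refine ⟨Matrix.toLin' B22, ?_, ?_, ?_⟩
    · have hcomp : Matrix.toLin' P3 ∘ₗ Matrix.toLin' B22 = LinearMap.id := by
        rw [← Matrix.toLin'_mul, PB_eq_one, Matrix.toLin'_one]
      intro x y hxy
      have h2 : (Matrix.toLin' P3) ((Matrix.toLin' B22) x)
          = (Matrix.toLin' P3) ((Matrix.toLin' B22) y) := congrArg _ hxy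
      rwa [← LinearMap.comp_apply, ← LinearMap.comp_apply, hcomp,
        LinearMap.id_apply, LinearMap.id_apply] at h2
    · intro x y
      simp only [Matrix.toLin'_apply]
      calc (B22 *ᵥ x) ⬝ᵥ (GK3 *ᵥ (B22 *ᵥ y))
          = (B22 *ᵥ x) ⬝ᵥ ((GK3 * B22) *ᵥ y) := by rw [Matrix.mulVec_mulVec]
        _ = ((B22 *ᵥ x) ᵥ* (GK3 * B22)) ⬝ᵥ y := by rw [Matrix.dotProduct_mulVec]
        _ = ((x ᵥ* B22ᵀ) ᵥ* (GK3 * B22)) ⬝ᵥ y := by rw [Matrix.vecMul_transpose]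
        _ = (x ᵥ* (B22ᵀ * (GK3 * B22))) ⬝ᵥ y := by rw [Matrix.vecMul_vecMul]
        _ = (x ᵥ* M') ⬝ᵥ y := by rw [← Matrix.mul_assoc, gram_eq]
        _ = x ⬝ᵥ (M' *ᵥ y) := (Matrix.dotProduct_mulVec x M' y).symm
    · intro v k hk hkv
      obtain ⟨y, hy⟩ := hkv
      have hcomp : Matrix.toLin' P3 ∘ₗ Matrix.toLin' B22 = LinearMap.id := by
        rw [← Matrix.toLin'_mul, PB_eq_one, Matrix.toLin'_one]
      have hy' : y = k • Matrix.toLin' P3 v := by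
        have := congrArg (Matrix.toLin' P3) hy
        rw [_root_.map_smul] at this
        calc y = (Matrix.toLin' P3 ∘ₗ Matrix.toLin' B22) y := by rw [hcomp]; rfl
          _ = k • Matrix.toLin' P3 v := this
      refine ⟨Matrix.toLin' P3 v, ?_⟩
      have : k • (Matrix.toLin' B22 (Matrix.toLin' P3 v)) = k • v := by
        rw [← _root_.map_smul, ← hy', hy]
      exact smul_right_injective (Fin 22 → ℤ) hk this
end
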